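/- Bounded distortion principle: for every n ≥ 1, σ ∈ Ω_n and x ∈ J_σ, ξ^{-1} ≤ |(f^n)'(x)| · |J_σ| ≤ ξ; moreover, for each 1 ≤ j ≤ N, |J_{σ*j}| ≥ ξ^{-2} B^{-1} |J_σ|, where σ*j denotes the word σ followed by the letter j and f^n denotes the n-fold composition of f. -/

import Mathlib

open MeasureTheory Filter Metric

noncomputable section

/-- A cookie-cutter system on `J = [0,1]`. -/
structure CookieCutter where
  N : ℕ
  hN : 2 ≤ N
  Jsub : Fin N → Set ℝ
  f : ℝ → ℝ
  φ : Fin N → ℝ → ℝ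
  c : ℝ
  γ : ℝ
  b : ℝ
  B : ℝ
  hJsub_sub : ∀ j, Jsub j ⊆ Set.Icc 0 1
  hJsub_interval : ∀ j, ∃ u v : ℝ, u ≤ v ∧ Jsub j = Set.Icc u v
  hJsub_disj : ∀ i j, i ≠ j → Disjoint (Jsub i) (Jsub j)
  hbij : ∀ j, Set.BijOn f (Jsub j) (Set.Icc 0 1)
  hφ_maps : ∀ j, ∀ x ∈ Set.Icc (0:ℝ) 1, φ j x ∈ Jsub j
  hφ_rinv : ∀ j, ∀ x ∈ Set.Icc (0:ℝ) 1, f (φ j x) = x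
  hφ_linv : ∀ j, ∀ x ∈ Jsub j, φ j (f x) = x
  hfdiff : ∀ j, ∀ x ∈ Jsub j, DifferentiableAt ℝ f x
  hφdiff : ∀ j, ∀ x ∈ Set.Icc (0:ℝ) 1, DifferentiableAt ℝ (φ j) x
  hc : 0 < c
  hγ : γ ∈ Set.Ioc (0:ℝ) 1
  hHolder : ∀ j, ∀ x ∈ Jsub j, ∀ y ∈ Jsub j, |deriv f x - deriv f y| ≤ c * |x - y| ^ γ
  hb : IsGLB ((fun x => |deriv f x|) '' ⋃ j, Jsub j) b
  hB : IsLUB ((fun x => |deriv f x|) '' ⋃ j, Jsub j) B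
  hb1 : 1 < b

namespace CookieCutter

variable (cc : CookieCutter)

/-- `φ_σ = φ_{σ_1} ∘ ⋯ ∘ φ_{σ_n}` for a word `σ`. -/
def wordMap : List (Fin cc.N) → ℝ → ℝ
  | [] => id
  | j :: rest => cc.φ j ∘ wordMap rest

/-- The basic interval `J_σ = φ_σ(J)`. -/
def Jc (σ : List (Fin cc.N)) : Set ℝ := cc.wordMap σ '' Set.Icc 0 1

/-- The diameter `|J_σ|`. -/
def diamJ (σ : List (Fin cc.N)) : ℝ := Metric.diam (cc.Jc σ)

/-- `‖φ'_σ‖ = sup_{x ∈ J} |φ'_σ(x)|`. -/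
def φnorm (σ : List (Fin cc.N)) : ℝ :=
  sSup ((fun x => |deriv (cc.wordMap σ) x|) '' Set.Icc 0 1)

/-- The distortion constant `ξ = exp (c / (b^γ − 1))`. -/
def xi : ℝ := Real.exp (cc.c / (cc.b ^ cc.γ - 1))

/-- The cookie-cutter set `E = ⋂_{n ≥ 1} ⋃_{σ ∈ Ω_n} J_σ`. -/
def E : Set ℝ := ⋂ (n : ℕ) (_ : 1 ≤ n), ⋃ σ : Fin n → Fin cc.N, cc.Jc (List.ofFn σ)

/-- `η = ξ^{9h}`. -/
def eta (h : ℝ) : ℝ := cc.xi ^ ((9:ℝ) * h)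

/-- `L = η³ ξ^{3h}`. -/
def Lconst (h : ℝ) : ℝ := (cc.eta h) ^ 3 * cc.xi ^ ((3:ℝ) * h)

/-- A Gibbs-like measure for the cookie-cutter system: a Borel probability measure
supported on `E` with `η⁻¹|J_σ|^h ≤ μ(J_σ) ≤ η|J_σ|^h` for every word `σ`. -/
def IsGibbsLike (μ : Measure ℝ) (h : ℝ) : Prop :=
  IsProbabilityMeasure μ ∧ μ (cc.Eᶜ) = 0 ∧
    ∀ σ : List (Fin cc.N), σ ≠ [] →
      (cc.eta h)⁻¹ * cc.diamJ σ ^ h ≤ (μ (cc.Jc σ)).toReal ∧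
      (μ (cc.Jc σ)).toReal ≤ cc.eta h * cc.diamJ σ ^ h

/-- A finite maximal antichain in `Ω`. -/
def IsFMA (Γ : Finset (List (Fin cc.N))) : Prop :=
  (∀ σ ∈ Γ, σ ≠ []) ∧
  (∀ ω : ℕ → Fin cc.N, ∃ k : ℕ, 1 ≤ k ∧ (List.ofFn fun i : Fin k => ω i) ∈ Γ) ∧
  ∀ σ ∈ Γ, ∀ τ ∈ Γ, σ <+: τ → σ = τ

end CookieCutter

/-- The `n`-th quantization error of order `r`. -/
def Vnr (μ : Measure ℝ) (n : ℕ) (r : ℝ) : ℝ :=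
  sInf ((fun α : Finset ℝ => ∫ x, Metric.infDist x (α : Set ℝ) ^ r ∂μ) ''
    {α : Finset ℝ | α.Nonempty ∧ α.card ≤ n})

/-- The auxiliary quantization error `u_{n,r}` with `U = (0,1)`. -/
def unr (μ : Measure ℝ) (n : ℕ) (r : ℝ) : ℝ :=
  sInf ((fun α : Finset ℝ =>
      ∫ x, Metric.infDist x ((α : Set ℝ) ∪ (Set.Ioo (0:ℝ) 1)ᶜ) ^ r ∂μ) ''
    {α : Finset ℝ | α.card ≤ n})


/-!
Since `|f'| ≥ b > 1`, for `x, y ∈ J_σ` the points `f^k x, f^k y` lie in `J_{σ_{k+1} ⋯ σ_n}`,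
an interval of length at most `b^{-(n-k)}`. By Hölder continuity the factors of the chain-rule
product `(f^n)' = ∏ f'(f^k ·)` at `x` and `y` differ by at most `c b^{-γ(n-k)}`, and summing the
geometric series gives `|(f^n)'(x)| ≤ ξ |(f^n)'(y)|`. As `f^n` maps `J_σ` onto `J`, the mean
value theorem compares `|(f^n)'| · |J_σ|` with `1`. For `σj` one has
`(f^{n+1})' = (f^n)' · f'(f^n ·)` with `|f'| ≤ B`, and the two-sided estimates for `σ` and `σj`
combine to the ratio bound.
-/

open Finset

theorem hasDerivAt_iterate_of_differentiableAt {𝕜 : Type*} [NontriviallyNormedField 𝕜]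
    {f : 𝕜 → 𝕜} {x : 𝕜} {n : ℕ} (hf : ∀ k < n, DifferentiableAt 𝕜 f (f^[k] x)) :
    HasDerivAt f^[n] (∏ k ∈ range n, deriv f (f^[k] x)) x := by
  induction n with
  | zero => simpa using hasDerivAt_id x
  | succ n ih =>
    rw [Function.iterate_succ', prod_range_succ, mul_comm]
    exact (hf n n.lt_succ_self).hasDerivAt.comp x
      (ih fun k hk => hf k (hk.trans n.lt_succ_self))

theorem Set.OrdConnected.exists_abs_deriv_mul_eq {g : ℝ → ℝ} {s : Set ℝ}
    (hs : s.OrdConnected) (hg : ∀ x ∈ s, DifferentiableAt ℝ g x) {u v : ℝ} (hu : u ∈ s)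
    (hv : v ∈ s) :
    ∃ z ∈ s, |deriv g z| * |u - v| = |g u - g v| := by
  wlog huv : u < v generalizing u v
  · rcases (not_lt.1 huv).eq_or_lt with rfl | hvu
    · exact ⟨_, hu, by simp⟩
    · obtain ⟨z, hz, h⟩ := this hv hu hvu
      exact ⟨z, hz, by rw [abs_sub_comm u, abs_sub_comm (g u), h]⟩
  have hsub : Set.Icc u v ⊆ s := hs.out hu hv
  obtain ⟨z, hz, hslope⟩ := exists_hasDerivAt_eq_slope g (deriv g) huv
    (fun w hw => (hg w (hsub hw)).continuousAt.continuousWithinAt)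
    (fun w hw => (hg w (hsub (Set.Ioo_subset_Icc_self hw))).hasDerivAt)
  refine ⟨z, hsub (Set.Ioo_subset_Icc_self hz), ?_⟩
  rw [hslope, abs_div, abs_sub_comm u, abs_sub_comm (g u), div_mul_cancel₀]
  exact abs_ne_zero.2 (sub_ne_zero.2 huv.ne')

theorem abs_le_abs_mul_exp_of_abs_sub_le {a a' δ : ℝ} (ha' : 1 ≤ |a'|) (h : |a - a'| ≤ δ) :
    |a| ≤ |a'| * Real.exp δ := by
  have hδ : 0 ≤ δ := (abs_nonneg _).trans h
  calc |a| ≤ |a'| + δ := by linarith [abs_sub_abs_le_abs_sub a a']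
    _ ≤ |a'| * (δ + 1) := by nlinarith
    _ ≤ |a'| * Real.exp δ := by gcongr; exact Real.add_one_le_exp δ

theorem prod_abs_le_exp_sum_mul_prod_abs {n : ℕ} {a a' δ : ℕ → ℝ}
    (ha' : ∀ k < n, 1 ≤ |a' k|) (h : ∀ k < n, |a k - a' k| ≤ δ k) :
    ∏ k ∈ range n, |a k| ≤ Real.exp (∑ k ∈ range n, δ k) * ∏ k ∈ range n, |a' k| := by
  rw [Real.exp_sum, ← prod_mul_distrib]
  refine prod_le_prod (fun _ _ => abs_nonneg _) fun k hk => ?_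
  rw [mul_comm]
  exact abs_le_abs_mul_exp_of_abs_sub_le (ha' k (mem_range.1 hk)) (h k (mem_range.1 hk))

theorem sum_range_inv_pow_sub_le {q : ℝ} (hq : 1 < q) (n : ℕ) :
    ∑ k ∈ range n, q⁻¹ ^ (n - k) ≤ (q - 1)⁻¹ := by
  have h0 : 0 ≤ q⁻¹ := by positivity
  have h1 : q⁻¹ < 1 := inv_lt_one_of_one_lt₀ hq
  calc ∑ k ∈ range n, q⁻¹ ^ (n - k) = ∑ i ∈ Ico 1 (n + 1), q⁻¹ ^ i := by
        rw [← sum_range_reflect, sum_Ico_eq_sum_range]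
        refine sum_congr (by simp) fun k hk => ?_
        rw [mem_range] at hk
        congr 1
        omega
    _ ≤ q⁻¹ ^ 1 / (1 - q⁻¹) := geom_sum_Ico_le_of_lt_one h0 h1
    _ = (q - 1)⁻¹ := by field_simp

namespace CookieCutter

variable (cc : CookieCutter)

theorem b_le_abs_deriv {j : Fin cc.N} {x : ℝ} (hx : x ∈ cc.Jsub j) : cc.b ≤ |deriv cc.f x| :=
  cc.hb.1 ⟨x, Set.mem_iUnion.2 ⟨j, hx⟩, rfl⟩

theorem abs_deriv_le_B {j : Fin cc.N} {x : ℝ} (hx : x ∈ cc.Jsub j) : |deriv cc.f x| ≤ cc.B :=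
  cc.hB.1 ⟨x, Set.mem_iUnion.2 ⟨j, hx⟩, rfl⟩

theorem b_pos : 0 < cc.b := one_pos.trans cc.hb1

theorem xi_pos : 0 < cc.xi := Real.exp_pos _

theorem wordMap_mem_Icc (σ : List (Fin cc.N)) {t : ℝ} (ht : t ∈ Set.Icc (0 : ℝ) 1) :
    cc.wordMap σ t ∈ Set.Icc (0 : ℝ) 1 := by
  induction σ with
  | nil => exact ht
  | cons j τ ih => exact cc.hJsub_sub j (cc.hφ_maps j _ ih)

theorem iterate_wordMap (σ : List (Fin cc.N)) {t : ℝ} (ht : t ∈ Set.Icc (0 : ℝ) 1) :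
    cc.f^[σ.length] (cc.wordMap σ t) = t := by
  induction σ with
  | nil => rfl
  | cons j τ ih =>
    rw [List.length_cons, Function.iterate_succ_apply]
    exact (congrArg _ (cc.hφ_rinv j _ (cc.wordMap_mem_Icc τ ht))).trans ih

theorem wordMap_append (σ τ : List (Fin cc.N)) :
    cc.wordMap (σ ++ τ) = cc.wordMap σ ∘ cc.wordMap τ := by
  induction σ with
  | nil => rfl
  | cons j σ ih => simp only [List.cons_append, wordMap, ih, Function.comp_assoc]

theorem continuousOn_wordMap (σ : List (Fin cc.N)) :
    ContinuousOn (cc.wordMap σ) (Set.Icc 0 1) := by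
  induction σ with
  | nil => exact continuousOn_id
  | cons j τ ih =>
    have hφ : ContinuousOn (cc.φ j) (Set.Icc 0 1) := fun z hz =>
      (cc.hφdiff j z hz).continuousAt.continuousWithinAt
    exact hφ.comp ih fun _ => cc.wordMap_mem_Icc τ

theorem ordConnected_Jc (σ : List (Fin cc.N)) : (cc.Jc σ).OrdConnected :=
  (isPreconnected_Icc.image _ (cc.continuousOn_wordMap σ)).ordConnected

theorem isBounded_Jc (σ : List (Fin cc.N)) : Bornology.IsBounded (cc.Jc σ) :=
  (isCompact_Icc.image_of_continuousOn (cc.continuousOn_wordMap σ)).isBounded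

theorem abs_sub_le_diamJ {σ : List (Fin cc.N)} {u v : ℝ} (hu : u ∈ cc.Jc σ)
    (hv : v ∈ cc.Jc σ) : |u - v| ≤ cc.diamJ σ :=
  (Real.dist_eq u v).symm.trans_le (Metric.dist_le_diam_of_mem (cc.isBounded_Jc σ) hu hv)

theorem ordConnected_Jsub (j : Fin cc.N) : (cc.Jsub j).OrdConnected := by
  obtain ⟨u, v, -, hJ⟩ := cc.hJsub_interval j
  exact hJ ▸ Set.ordConnected_Icc

theorem Jc_append_subset (σ τ : List (Fin cc.N)) : cc.Jc (σ ++ τ) ⊆ cc.Jc σ := by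
  rintro _ ⟨t, ht, rfl⟩
  rw [cc.wordMap_append]
  exact ⟨_, cc.wordMap_mem_Icc τ ht, rfl⟩

theorem Jc_cons_subset (j : Fin cc.N) (τ : List (Fin cc.N)) : cc.Jc (j :: τ) ⊆ cc.Jsub j := by
  rintro _ ⟨t, ht, rfl⟩
  exact cc.hφ_maps j _ (cc.wordMap_mem_Icc τ ht)

theorem apply_mem_Jc_of_mem_Jc_cons {j : Fin cc.N} {τ : List (Fin cc.N)} {x : ℝ}
    (hx : x ∈ cc.Jc (j :: τ)) : cc.f x ∈ cc.Jc τ := by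
  obtain ⟨t, ht, rfl⟩ := hx
  exact ⟨t, ht, (cc.hφ_rinv j _ (cc.wordMap_mem_Icc τ ht)).symm⟩

theorem iterate_mem_Jc_drop {σ : List (Fin cc.N)} {x : ℝ} (hx : x ∈ cc.Jc σ) {k : ℕ}
    (hk : k ≤ σ.length) : cc.f^[k] x ∈ cc.Jc (σ.drop k) := by
  induction σ generalizing x k with
  | nil => simp_all
  | cons j τ ih =>
    cases k with
    | zero => exact hx
    | succ k => exact ih (cc.apply_mem_Jc_of_mem_Jc_cons hx) (by simpa using hk)

theorem iterate_mem_Jsub {σ : List (Fin cc.N)} {x : ℝ} (hx : x ∈ cc.Jc σ) {k : ℕ}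
    (hk : k < σ.length) : cc.f^[k] x ∈ cc.Jsub σ[k] := by
  have h := cc.iterate_mem_Jc_drop hx hk.le
  rw [List.drop_eq_getElem_cons hk] at h
  exact cc.Jc_cons_subset _ _ h

theorem hasDerivAt_iterate {σ : List (Fin cc.N)} {x : ℝ} (hx : x ∈ cc.Jc σ) :
    HasDerivAt cc.f^[σ.length] (∏ k ∈ range σ.length, deriv cc.f (cc.f^[k] x)) x :=
  hasDerivAt_iterate_of_differentiableAt fun _ hk => cc.hfdiff _ _ (cc.iterate_mem_Jsub hx hk)

theorem abs_deriv_iterate_pos {σ : List (Fin cc.N)} {x : ℝ} (hx : x ∈ cc.Jc σ) :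
    0 < |deriv cc.f^[σ.length] x| := by
  rw [(cc.hasDerivAt_iterate hx).deriv, abs_prod]
  exact prod_pos fun k hk =>
    cc.b_pos.trans_le (cc.b_le_abs_deriv (cc.iterate_mem_Jsub hx (mem_range.1 hk)))

theorem exists_abs_deriv_iterate_mul_eq (σ : List (Fin cc.N)) {u v : ℝ} (hu : u ∈ cc.Jc σ)
    (hv : v ∈ cc.Jc σ) :
    ∃ z ∈ cc.Jc σ, |deriv cc.f^[σ.length] z| * |u - v| =
      |cc.f^[σ.length] u - cc.f^[σ.length] v| :=
  (cc.ordConnected_Jc σ).exists_abs_deriv_mul_eq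
    (fun _ hz => (cc.hasDerivAt_iterate hz).differentiableAt) hu hv

theorem diamJ_le_inv_pow (σ : List (Fin cc.N)) : cc.diamJ σ ≤ cc.b⁻¹ ^ σ.length := by
  induction σ with
  | nil => simp [diamJ, Jc, wordMap, Real.diam_Icc]
  | cons j τ ih =>
    refine Metric.diam_le_of_forall_dist_le (by have := cc.b_pos; positivity) fun x hx y hy => ?_
    obtain ⟨z, hz, hslope⟩ := (cc.ordConnected_Jsub j).exists_abs_deriv_mul_eq
      (cc.hfdiff j) (cc.Jc_cons_subset j τ hx) (cc.Jc_cons_subset j τ hy)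
    have himage : |cc.f x - cc.f y| ≤ cc.b⁻¹ ^ τ.length :=
      (cc.abs_sub_le_diamJ (cc.apply_mem_Jc_of_mem_Jc_cons hx)
        (cc.apply_mem_Jc_of_mem_Jc_cons hy)).trans ih
    rw [Real.dist_eq, List.length_cons, pow_succ', le_inv_mul_iff₀ cc.b_pos]
    calc cc.b * |x - y| ≤ |deriv cc.f z| * |x - y| := by gcongr; exact cc.b_le_abs_deriv hz
      _ ≤ _ := hslope ▸ himage

theorem iterate_mem_Icc {σ : List (Fin cc.N)} {x : ℝ} (hx : x ∈ cc.Jc σ) :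
    cc.f^[σ.length] x ∈ Set.Icc (0 : ℝ) 1 := by
  obtain ⟨t, ht, rfl⟩ := hx
  rwa [cc.iterate_wordMap σ ht]

theorem abs_deriv_iterate_le_xi_mul {σ : List (Fin cc.N)} {x y : ℝ} (hx : x ∈ cc.Jc σ)
    (hy : y ∈ cc.Jc σ) : |deriv cc.f^[σ.length] x| ≤ cc.xi * |deriv cc.f^[σ.length] y| := by
  set n := σ.length
  set q := cc.b ^ cc.γ
  have hq : 1 < q := Real.one_lt_rpow cc.hb1 cc.hγ.1
  have hclose : ∀ k < n,
      |deriv cc.f (cc.f^[k] x) - deriv cc.f (cc.f^[k] y)| ≤ cc.c * q⁻¹ ^ (n - k) := by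
    intro k hk
    have hdist : |cc.f^[k] x - cc.f^[k] y| ≤ cc.b⁻¹ ^ (n - k) :=
      (cc.abs_sub_le_diamJ (cc.iterate_mem_Jc_drop hx hk.le)
        (cc.iterate_mem_Jc_drop hy hk.le)).trans
          ((cc.diamJ_le_inv_pow _).trans_eq (by rw [List.length_drop]))
    have hb0 : 0 ≤ cc.b⁻¹ := inv_nonneg.2 cc.b_pos.le
    calc _ ≤ cc.c * |cc.f^[k] x - cc.f^[k] y| ^ cc.γ :=
          cc.hHolder _ _ (cc.iterate_mem_Jsub hx hk) _ (cc.iterate_mem_Jsub hy hk)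
      _ ≤ cc.c * (cc.b⁻¹ ^ (n - k)) ^ cc.γ := by
          gcongr
          · exact cc.hc.le
          · exact cc.hγ.1.le
      _ = cc.c * q⁻¹ ^ (n - k) := by
          rw [← Real.rpow_pow_comm hb0, Real.inv_rpow cc.b_pos.le]
  rw [(cc.hasDerivAt_iterate hx).deriv, (cc.hasDerivAt_iterate hy).deriv, abs_prod, abs_prod]
  calc _ ≤ Real.exp (∑ k ∈ range n, cc.c * q⁻¹ ^ (n - k)) *
        ∏ k ∈ range n, |deriv cc.f (cc.f^[k] y)| :=
        prod_abs_le_exp_sum_mul_prod_abs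
          (fun k hk => cc.hb1.le.trans (cc.b_le_abs_deriv (cc.iterate_mem_Jsub hy hk))) hclose
    _ ≤ cc.xi * ∏ k ∈ range n, |deriv cc.f (cc.f^[k] y)| := by
        rw [← mul_sum, xi, div_eq_mul_inv]
        gcongr
        · exact cc.hc.le
        · exact sum_range_inv_pow_sub_le hq n

theorem abs_deriv_iterate_mul_diamJ_le_xi {σ : List (Fin cc.N)} {x : ℝ}
    (hx : x ∈ cc.Jc σ) : |deriv cc.f^[σ.length] x| * cc.diamJ σ ≤ cc.xi := by
  have hpos := cc.abs_deriv_iterate_pos hx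
  rw [← le_div_iff₀' hpos]
  refine Metric.diam_le_of_forall_dist_le (div_nonneg cc.xi_pos.le hpos.le) fun u hu v hv => ?_
  obtain ⟨z, hz, hmvt⟩ := cc.exists_abs_deriv_iterate_mul_eq σ hu hv
  have hunit := Real.dist_le_of_mem_Icc_01 (cc.iterate_mem_Icc hu) (cc.iterate_mem_Icc hv)
  rw [Real.dist_eq] at hunit
  rw [le_div_iff₀' hpos, Real.dist_eq]
  calc |deriv cc.f^[σ.length] x| * |u - v|
        ≤ cc.xi * |deriv cc.f^[σ.length] z| * |u - v| := by
          gcongr; exact cc.abs_deriv_iterate_le_xi_mul hx hz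
      _ = cc.xi * |cc.f^[σ.length] u - cc.f^[σ.length] v| := by rw [mul_assoc, hmvt]
      _ ≤ cc.xi := mul_le_of_le_one_right cc.xi_pos.le hunit

theorem inv_xi_le_abs_deriv_iterate_mul_diamJ {σ : List (Fin cc.N)} {x : ℝ}
    (hx : x ∈ cc.Jc σ) : cc.xi⁻¹ ≤ |deriv cc.f^[σ.length] x| * cc.diamJ σ := by
  have h0 : (0 : ℝ) ∈ Set.Icc (0 : ℝ) 1 := by norm_num
  have h1 : (1 : ℝ) ∈ Set.Icc (0 : ℝ) 1 := by norm_num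
  have hφ0 : cc.wordMap σ 0 ∈ cc.Jc σ := ⟨0, h0, rfl⟩
  have hφ1 : cc.wordMap σ 1 ∈ cc.Jc σ := ⟨1, h1, rfl⟩
  obtain ⟨z, hz, hmvt⟩ := cc.exists_abs_deriv_iterate_mul_eq σ hφ0 hφ1
  rw [cc.iterate_wordMap σ h0, cc.iterate_wordMap σ h1] at hmvt
  rw [inv_le_iff_one_le_mul₀' cc.xi_pos]
  calc (1 : ℝ) = |deriv cc.f^[σ.length] z| * |cc.wordMap σ 0 - cc.wordMap σ 1| := by
        rw [hmvt]; norm_num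
    _ ≤ cc.xi * |deriv cc.f^[σ.length] x| * cc.diamJ σ :=
        mul_le_mul (cc.abs_deriv_iterate_le_xi_mul hz hx) (cc.abs_sub_le_diamJ hφ0 hφ1)
          (abs_nonneg _) (mul_nonneg cc.xi_pos.le (abs_nonneg _))
    _ = _ := mul_assoc _ _ _

theorem mul_diamJ_le_diamJ_append_singleton (σ : List (Fin cc.N)) (j : Fin cc.N) :
    cc.xi⁻¹ ^ 2 * cc.B⁻¹ * cc.diamJ σ ≤ cc.diamJ (σ ++ [j]) := by
  obtain ⟨x, hx⟩ : (cc.Jc (σ ++ [j])).Nonempty := ⟨_, 0, by norm_num, rfl⟩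
  have hxσ := cc.Jc_append_subset σ [j] hx
  have hlast : cc.f^[σ.length] x ∈ cc.Jsub j := by
    have h := cc.iterate_mem_Jc_drop hx (k := σ.length) (by simp)
    rw [List.drop_left] at h
    exact cc.Jc_cons_subset j [] h
  have hsplit : |deriv cc.f^[(σ ++ [j]).length] x| =
      |deriv cc.f^[σ.length] x| * |deriv cc.f (cc.f^[σ.length] x)| := by
    rw [(cc.hasDerivAt_iterate hx).deriv, (cc.hasDerivAt_iterate hxσ).deriv, List.length_append,
      List.length_singleton, prod_range_succ, abs_mul]
  have hB := cc.abs_deriv_le_B hlast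
  have hBpos : 0 < cc.B := cc.b_pos.trans_le ((cc.b_le_abs_deriv hlast).trans hB)
  have hd : 0 ≤ cc.diamJ σ := Metric.diam_nonneg
  have hd' : 0 ≤ cc.diamJ (σ ++ [j]) := Metric.diam_nonneg
  have key : cc.xi⁻¹ * cc.diamJ σ ≤ cc.B * cc.diamJ (σ ++ [j]) * cc.xi :=
    calc cc.xi⁻¹ * cc.diamJ σ
        ≤ |deriv cc.f^[σ.length] x| * |deriv cc.f (cc.f^[σ.length] x)| *
            cc.diamJ (σ ++ [j]) * cc.diamJ σ := by
          gcongr; rw [← hsplit]; exact cc.inv_xi_le_abs_deriv_iterate_mul_diamJ hx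
      _ ≤ |deriv cc.f^[σ.length] x| * cc.B * cc.diamJ (σ ++ [j]) * cc.diamJ σ := by gcongr
      _ = cc.B * cc.diamJ (σ ++ [j]) * (|deriv cc.f^[σ.length] x| * cc.diamJ σ) := by ring
      _ ≤ cc.B * cc.diamJ (σ ++ [j]) * cc.xi := by
          gcongr; exact cc.abs_deriv_iterate_mul_diamJ_le_xi hxσ
  calc cc.xi⁻¹ ^ 2 * cc.B⁻¹ * cc.diamJ σ
        = cc.xi⁻¹ * cc.diamJ σ * (cc.xi⁻¹ * cc.B⁻¹) := by ring
    _ ≤ cc.B * cc.diamJ (σ ++ [j]) * cc.xi * (cc.xi⁻¹ * cc.B⁻¹) := by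
        gcongr; have := cc.xi_pos; positivity
    _ = cc.diamJ (σ ++ [j]) := by field_simp [cc.xi_pos.ne', hBpos.ne']

end CookieCutter

theorem bounded_distortion_principle (cc : CookieCutter) :
    ∀ n : ℕ, 1 ≤ n → ∀ σ : List (Fin cc.N), σ.length = n →
      (∀ x ∈ cc.Jc σ,
        cc.xi⁻¹ ≤ |deriv (cc.f^[n]) x| * cc.diamJ σ ∧
        |deriv (cc.f^[n]) x| * cc.diamJ σ ≤ cc.xi) ∧
      ∀ j : Fin cc.N, cc.xi⁻¹ ^ 2 * cc.B⁻¹ * cc.diamJ σ ≤ cc.diamJ (σ ++ [j]) := by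
  rintro n - σ rfl
  exact ⟨fun x hx => ⟨cc.inv_xi_le_abs_deriv_iterate_mul_diamJ hx,
    cc.abs_deriv_iterate_mul_diamJ_le_xi hx⟩, cc.mul_diamJ_le_diamJ_append_singleton σ⟩
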